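/- arXiv:1409.7736 — 8 statements merged into one kernel-verified Lean document; each statement's English description precedes it below -/
import Mathlib

section
/- For every finite set {q₁, …, q_m} of rational numbers there exists a nonconstant polynomial f with rational coefficients such that f(qᵢ) = 0 for every i, and such that for every complex number z with f′(z) = 0 one has f(z) ∈ {0, 1} (i.e., all finite critical values of f lie in {0,1}). -/
/-!
Induct on the size of a finite set `S ⊆ ℚ` containing `0` and `1`, looking for a nonconstant
`f` with `f(S) ⊆ {0, 1}` and critical values in `{0, 1}`. If `S` has a third point, take its
extremes `a < c` and some `b` in between, and choose `m, n ≥ 1` with `m (c - b) = n (b - a)`.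
Then `P = K (X - a)^m (X - c)^n` has critical points only at `a`, `b`, `c`, and with `K` chosen
so that `P(b) = 1` its critical values are `0` and `1`. Since `P(a) = P(c)`, the set `P(S)` is
smaller and still contains `0` and `1`; by the chain rule the critical values of `g ∘ P` lie in
`g({0, 1})` together with those of `g`. Finally composing with `4X(1 - X)` (the polynomial `P`
for `0 < 1/2 < 1`) sends `{0, 1}` to `0`.
-/

open Polynomial Set

namespace Polynomial

variable {R A : Type*} [CommRing R] [CommRing A] [Algebra R A]

variable (A) in
def criticalPoints (f : R[X]) : Set A := {z | aeval z (derivative f) = 0}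

variable (A) in
def criticalValues (f : R[X]) : Set A := (aeval · f) '' criticalPoints A f

theorem criticalPoints_C_mul [IsDomain A] {k : R} (hk : algebraMap R A k ≠ 0) (p : R[X]) :
    criticalPoints A (C k * p) = criticalPoints A p := by
  ext z
  simp [criticalPoints, hk]

theorem natDegree_pos_of_eval_ne {p : R[X]} {x y : R} (h : p.eval x ≠ p.eval y) :
    0 < p.natDegree :=
  Nat.pos_of_ne_zero fun h0 => h <| by rw [eq_C_of_natDegree_eq_zero h0]; simp only [eval_C]

theorem criticalValues_comp_subset [IsDomain A] (g f : R[X]) :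
    criticalValues A (g.comp f) ⊆ (aeval · g) '' criticalValues A f ∪ criticalValues A g := by
  rintro _ ⟨z, hz, rfl⟩
  simp only [criticalPoints, mem_ofPred_eq, derivative_comp, map_mul, aeval_comp,
    mul_eq_zero] at hz
  rcases hz with hz | hz
  · exact .inl ⟨aeval z f, ⟨z, hz, rfl⟩, (aeval_comp ..).symm⟩
  · exact .inr ⟨aeval z f, hz, (aeval_comp ..).symm⟩

theorem mapsTo_aeval_zero_one {g : R[X]} (hg : MapsTo g.eval {0, 1} {0, 1}) :
    MapsTo (aeval · g : A → A) {0, 1} {0, 1} := by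
  have hcast : MapsTo (algebraMap R A) {0, 1} {0, 1} := by rintro _ (rfl | rfl) <;> simp
  rintro _ (rfl | rfl)
  · have h := hcast (hg (.inl rfl))
    rwa [← aeval_algebraMap_apply_eq_algebraMap_eval, map_zero] at h
  · have h := hcast (hg (.inr rfl))
    rwa [← aeval_algebraMap_apply_eq_algebraMap_eval, map_one] at h

theorem criticalValues_comp_subset_zero_one [IsDomain A] {g f : R[X]}
    (hg : MapsTo g.eval {0, 1} {0, 1}) (hgc : criticalValues A g ⊆ {0, 1})
    (hfc : criticalValues A f ⊆ {0, 1}) : criticalValues A (g.comp f) ⊆ {0, 1} :=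
  (criticalValues_comp_subset g f).trans <|
    union_subset ((mapsTo_aeval_zero_one hg).mono_left hfc).image_subset hgc

theorem derivative_X_sub_C_pow_mul_X_sub_C_pow (a c : R) (m n : ℕ) :
    derivative ((X - C a) ^ (m + 1) * (X - C c) ^ (n + 1)) =
      (X - C a) ^ m * (X - C c) ^ n *
        ((m + 1 : R[X]) * (X - C c) + (n + 1 : R[X]) * (X - C a)) := by
  rw [derivative_mul, derivative_X_sub_C_pow, derivative_X_sub_C_pow]
  simp only [Nat.cast_add, Nat.cast_one, C_add, C_1, map_natCast, add_tsub_cancel_right]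
  ring

theorem criticalPoints_X_sub_C_pow_mul_X_sub_C_pow_subset [IsDomain A] (a c : R) (m n : ℕ) :
    criticalPoints A ((X - C a) ^ (m + 1) * (X - C c) ^ (n + 1)) ⊆
      {algebraMap R A a, algebraMap R A c} ∪
        {z | (m + 1) * (z - algebraMap R A c) + (n + 1) * (z - algebraMap R A a) = 0} := by
  intro z hz
  simp only [criticalPoints, mem_ofPred_eq, derivative_X_sub_C_pow_mul_X_sub_C_pow, map_mul,
    map_add, map_pow, map_sub, aeval_X, aeval_C, map_natCast, map_one, mul_eq_zero,
    pow_eq_zero_iff', sub_eq_zero] at hz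
  rcases hz with ((⟨rfl, -⟩ | ⟨rfl, -⟩) | hz)
  · exact .inl (.inl rfl)
  · exact .inl (.inr rfl)
  · exact .inr hz

end Polynomial

theorem Rat.exists_succ_mul_eq_succ_mul {x y : ℚ} (hx : 0 < x) (hy : 0 < y) :
    ∃ m n : ℕ, (m + 1 : ℚ) * x = (n + 1) * y := by
  have hnum : 0 < (y / x).num := Rat.num_pos.mpr (div_pos hy hx)
  obtain ⟨m, hm⟩ : ∃ m : ℕ, (y / x).num = m + 1 := ⟨(y / x).num.toNat - 1, by omega⟩
  obtain ⟨n, hn⟩ := Nat.exists_eq_succ_of_ne_zero (y / x).den_nz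
  refine ⟨m, n, ?_⟩
  have key := (y / x).mul_den_eq_num
  rw [hm, hn] at key
  push_cast at key
  rw [← key]
  field_simp

theorem exists_rat_poly_eval_zero_one_zero (a b c : ℚ) (hab : a < b) (hbc : b < c) :
    ∃ P : ℚ[X], 0 < P.natDegree ∧ P.eval a = 0 ∧ P.eval b = 1 ∧ P.eval c = 0 ∧
      criticalValues ℂ P ⊆ {0, 1} := by
  obtain ⟨m, n, hmn⟩ := Rat.exists_succ_mul_eq_succ_mul (sub_pos.mpr hbc) (sub_pos.mpr hab)
  set P₀ : ℚ[X] := (X - C a) ^ (m + 1) * (X - C c) ^ (n + 1)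
  have hb : P₀.eval b ≠ 0 := by simp [P₀, sub_ne_zero, hab.ne', hbc.ne]
  set P := C (P₀.eval b)⁻¹ * P₀
  have hPa : P.eval a = 0 := by simp [P, P₀]
  have hPb : P.eval b = 1 := by simp only [P, eval_mul, eval_C, inv_mul_cancel₀ hb]
  have hPc : P.eval c = 0 := by simp [P, P₀]
  have hcrit : criticalPoints ℂ P ⊆ algebraMap ℚ ℂ '' {a, b, c} := by
    intro z hz
    rw [criticalPoints_C_mul (by simpa using hb)] at hz
    rcases criticalPoints_X_sub_C_pow_mul_X_sub_C_pow_subset a c m n hz with (rfl | rfl) | hz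
    · exact mem_image_of_mem _ (by simp)
    · exact mem_image_of_mem _ (by simp)
    · refine ⟨b, by simp, ?_⟩
      have hmnC : ((m + 1) * (c - b) : ℂ) = (n + 1) * (b - a) := by exact_mod_cast hmn
      have hz' : ((m + n + 2 : ℕ) : ℂ) * (z - b) = 0 := by
        simp only [mem_ofPred_eq, eq_ratCast] at hz
        push_cast
        linear_combination hz + hmnC
      rw [eq_ratCast, eq_comm, ← sub_eq_zero]
      exact (mul_eq_zero.mp hz').resolve_left (Nat.cast_ne_zero.mpr (by omega))
  refine ⟨P, natDegree_pos_of_eval_ne (x := a) (y := b) (by simp [hPa, hPb]), hPa, hPb, hPc, ?_⟩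
  rintro _ ⟨_, hz, rfl⟩
  obtain ⟨q, hq, rfl⟩ := hcrit hz
  beta_reduce
  rw [aeval_algebraMap_apply_eq_algebraMap_eval]
  rcases hq with rfl | rfl | rfl <;> simp [hPa, hPb, hPc]

theorem Finset.exists_rat_poly_card_image_lt (S : Finset ℚ) (hS : 2 < S.card) :
    ∃ P : ℚ[X], 0 < P.natDegree ∧ (S.image P.eval).card < S.card ∧
      0 ∈ S.image P.eval ∧ 1 ∈ S.image P.eval ∧ criticalValues ℂ P ⊆ {0, 1} := by
  have hne : S.Nonempty := Finset.card_pos.mp (by omega)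
  obtain ⟨b, hbS, hb⟩ := Finset.exists_mem_notMem_of_card_lt_card
    (Finset.card_le_two.trans_lt hS : ({S.min' hne, S.max' hne} : Finset ℚ).card < S.card)
  simp only [Finset.mem_insert, Finset.mem_singleton, not_or] at hb
  have hab : S.min' hne < b := (S.min'_le b hbS).lt_of_ne (Ne.symm hb.1)
  have hbc : b < S.max' hne := (S.le_max' b hbS).lt_of_ne hb.2
  obtain ⟨P, hPdeg, hPa, hPb, hPc, hPcrit⟩ := exists_rat_poly_eval_zero_one_zero _ _ _ hab hbc
  refine ⟨P, hPdeg, card_image_le.lt_of_ne fun h => ?_,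
    mem_image.mpr ⟨_, S.min'_mem hne, hPa⟩, mem_image.mpr ⟨b, hbS, hPb⟩, hPcrit⟩
  exact (hab.trans hbc).ne (Finset.card_image_iff.mp h (S.min'_mem hne) (S.max'_mem hne)
    (hPa.trans hPc.symm))

theorem Finset.exists_rat_poly_mapsTo_zero_one (S : Finset ℚ) (h0 : 0 ∈ S) (h1 : 1 ∈ S) :
    ∃ f : ℚ[X], 0 < f.natDegree ∧
      MapsTo f.eval S {0, 1} ∧ criticalValues ℂ f ⊆ {0, 1} := by
  induction hn : S.card using Nat.strong_induction_on generalizing S with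
  | _ n ih =>
  by_cases hS : S.card ≤ 2
  · have hS01 : S = {0, 1} := (Finset.eq_of_subset_of_card_le
      (by simp [Finset.insert_subset_iff, h0, h1]) (hS.trans_eq (by simp))).symm
    refine ⟨X, by simp, fun q hq => by simpa [hS01] using hq, ?_⟩
    rintro _ ⟨z, hz, -⟩
    simp [criticalPoints] at hz
  · obtain ⟨P, hPdeg, hcard, hP0, hP1, hPcrit⟩ := S.exists_rat_poly_card_image_lt (by omega)
    obtain ⟨g, hgdeg, hgS, hgcrit⟩ := ih _ (hn ▸ hcard) _ hP0 hP1 rfl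
    refine ⟨g.comp P, by rw [natDegree_comp]; exact Nat.mul_pos hgdeg hPdeg, fun q hq => ?_,
      criticalValues_comp_subset_zero_one (hgS.mono_left ?_) hgcrit hPcrit⟩
    · simpa only [eval_comp] using hgS (Finset.mem_image_of_mem _ hq)
    · rintro _ (rfl | rfl) <;> assumption

/-- **Belyi's final lemma.** For every finite set of rational numbers there is a
nonconstant polynomial `f ∈ ℚ[X]` vanishing at all of them, all of whose finite
critical values (values at complex zeros of `f'`) lie in `{0, 1}`. -/
theorem exists_rat_poly_vanishing_with_critical_values_in_zero_one
    (s : Finset ℚ) :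
    ∃ f : Polynomial ℚ, 1 ≤ f.natDegree ∧ (∀ q ∈ s, f.eval q = 0) ∧
      ∀ z : ℂ, Polynomial.aeval z (Polynomial.derivative f) = 0 →
        Polynomial.aeval z f = 0 ∨ Polynomial.aeval z f = 1 := by
  obtain ⟨G, hGdeg, hGs, hGcrit⟩ :=
    (insert 0 (insert 1 s)).exists_rat_poly_mapsTo_zero_one (by simp) (by simp)
  obtain ⟨P, hPdeg, hP0, -, hP1, hPcrit⟩ :=
    exists_rat_poly_eval_zero_one_zero 0 (1 / 2) 1 (by norm_num) (by norm_num)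
  have hP : MapsTo P.eval {0, 1} {0} := by rintro _ (rfl | rfl) <;> simp [hP0, hP1]
  refine ⟨P.comp G, by rw [natDegree_comp]; exact Nat.mul_pos hPdeg hGdeg, fun q hq => ?_,
    fun z hz => criticalValues_comp_subset_zero_one (hP.mono_right (by simp)) hPcrit hGcrit
      ⟨z, hz, rfl⟩⟩
  simpa only [eval_comp, mem_singleton_iff] using hP (hGs (by simp [hq]))
end

section
/- Let m, n ≥ 1 be integers and let P(x) = ((m+n)^{m+n}/(m^m·n^n))·x^m·(1−x)^n, a polynomial with rational coefficients. Then P(0) = 0, P(1) = 0, P(m/(m+n)) = 1, and every z ∈ ℂ with P′(z) = 0 satisfies P(z) ∈ {0, 1}. -/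
open Polynomial

/-! Since the logarithmic derivative of `x^m (1-x)^n` is `m/x - n/(1-x)`, the identity
`x (1-x) P' = (m - (m+n) x) P` holds. So a critical point of `P` is either a zero of `P` or the
point `m/(m+n)`, where the constant is chosen exactly so that `P` takes the value `1`. -/

theorem X_mul_one_sub_X_mul_derivative {R : Type*} [CommRing R] (c : R) (m n : ℕ) :
    X * (1 - X) * derivative (C c * X ^ m * (1 - X) ^ n) =
      C c * X ^ m * (1 - X) ^ n * ((m : R[X]) - (m + n : R[X]) * X) := by
  rcases m with _ | m <;> rcases n with _ | n <;>
    simp only [derivative_mul, derivative_pow, derivative_C, derivative_X, derivative_sub,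
      derivative_one, C_eq_natCast, Nat.add_sub_cancel] <;> push_cast <;> ring

theorem belyi_const_mul_pow_mul_one_sub_pow_eq_one {K : Type*} [Field K] [CharZero K] {m n : ℕ}
    (hmn : m + n ≠ 0) :
    ((m + n : K) ^ (m + n) / ((m : K) ^ m * (n : K) ^ n)) * ((m : K) / (m + n)) ^ m *
      (1 - (m : K) / (m + n)) ^ n = 1 := by
  have hmn' : (m + n : K) ≠ 0 := mod_cast hmn
  have hm : (m : K) ^ m ≠ 0 := mod_cast Nat.pow_self_pos.ne'
  have hn : (n : K) ^ n ≠ 0 := mod_cast Nat.pow_self_pos.ne'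
  rw [one_sub_div hmn', add_sub_cancel_left, div_pow, div_pow]
  field_simp
  ring

/-- **The Belyi polynomial.** For `m, n ≥ 1`, the polynomial
`P(x) = ((m+n)^(m+n) / (m^m * n^n)) * x^m * (1-x)^n` satisfies `P(0) = 0`,
`P(1) = 0`, `P(m/(m+n)) = 1`, and every complex critical point `z` (i.e. with
`P'(z) = 0`) has `P(z) ∈ {0, 1}`. -/
theorem belyi_polynomial_critical_values (m n : ℕ) (hm : 1 ≤ m) (hn : 1 ≤ n) :
    let P : Polynomial ℚ :=
      C ((((m : ℚ) + n) ^ (m + n)) / ((m : ℚ) ^ m * (n : ℚ) ^ n)) * X ^ m * (1 - X) ^ n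
    P.eval 0 = 0 ∧ P.eval 1 = 0 ∧ P.eval ((m : ℚ) / ((m : ℚ) + n)) = 1 ∧
      ∀ z : ℂ, Polynomial.aeval z (Polynomial.derivative P) = 0 →
        Polynomial.aeval z P = 0 ∨ Polynomial.aeval z P = 1 := by
  intro P
  have hP : P.eval ((m : ℚ) / ((m : ℚ) + n)) = 1 := by
    simpa [P] using belyi_const_mul_pow_mul_one_sub_pow_eq_one (K := ℚ) (by omega : m + n ≠ 0)
  refine ⟨by simp [P, zero_pow (by omega : m ≠ 0)], by simp [P, zero_pow (by omega : n ≠ 0)],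
    hP, fun z hz => ?_⟩
  have hlog : aeval z (X * (1 - X) * derivative P) =
      aeval z (P * ((m : ℚ[X]) - (m + n : ℚ[X]) * X)) :=
    congrArg (aeval z) (X_mul_one_sub_X_mul_derivative _ m n)
  simp only [map_mul, hz, mul_zero] at hlog
  rcases mul_eq_zero.1 hlog.symm with hPz | hcrit
  · exact Or.inl hPz
  · right
    simp only [map_sub, map_mul, map_add, map_natCast, aeval_X] at hcrit
    have hm_add_n : (m + n : ℂ) ≠ 0 := by norm_cast; omega
    have hz : z = algebraMap ℚ ℂ ((m : ℚ) / (m + n)) := by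
      rw [map_div₀, map_add, map_natCast, map_natCast, eq_div_iff hm_add_n]
      linear_combination -hcrit
    rw [hz, aeval_algebraMap_apply_eq_algebraMap_eval, hP, map_one]
end

section
/- Let g ∈ ℚ[X] be a squarefree polynomial of degree ≥ 1. Then there exists a nonzero polynomial g₂ ∈ ℚ[X] with deg g₂ < deg g such that g₂(g(c)) = 0 for every complex number c with g′(c) = 0. (In other words, all finite critical values of g are roots of a rational polynomial of strictly smaller degree than g.) -/
/-! If `c` is a root of `g'`, then `q ↦ q(c)` factors through `ℚ[X]/(g')`, sending the class
of `g` to the critical value `g(c)`. Hence the minimal polynomial of that class, whose degree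
is at most `dim ℚ[X]/(g') = deg g' < deg g`, vanishes at every critical value. -/

open Polynomial

namespace AdjoinRoot

theorem aeval_aeval_minpoly_mk_eq_zero {R S : Type*} [CommRing R] [CommRing S] [Algebra R S]
    {p : R[X]} (q : R[X]) {s : S} (hs : aeval s p = 0) :
    aeval (aeval s q) (minpoly R (mk p q)) = 0 := by
  let φ := liftAlgHom p (Algebra.ofId R S) s hs
  have hφ : φ (mk p q) = aeval s q := liftAlgHom_mk p (Algebra.ofId R S) s hs q
  rw [← hφ, aeval_algHom_apply, minpoly.aeval, map_zero]

variable {K : Type*} [Field K] {p : K[X]}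

theorem minpoly_ne_zero (hp : p ≠ 0) (x : AdjoinRoot p) : minpoly K x ≠ 0 :=
  have := (powerBasis hp).finite
  minpoly.ne_zero (Algebra.IsIntegral.isIntegral x)

theorem natDegree_minpoly_le (hp : p ≠ 0) (x : AdjoinRoot p) :
    (minpoly K x).natDegree ≤ p.natDegree :=
  have := (powerBasis hp).finite
  (minpoly.natDegree_le x).trans_eq finrank_quotient_span_eq_natDegree

end AdjoinRoot

theorem exists_smaller_degree_poly_annihilating_critical_values_general
    (g : Polynomial ℚ) (hdeg : 1 ≤ g.natDegree) :
    ∃ g₂ : Polynomial ℚ, g₂ ≠ 0 ∧ g₂.natDegree < g.natDegree ∧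
      ∀ c : ℂ, Polynomial.aeval c (Polynomial.derivative g) = 0 →
        Polynomial.aeval (Polynomial.aeval c g) g₂ = 0 := by
  have hg' : derivative g ≠ 0 := mt derivative_eq_zero.mp (by omega)
  refine ⟨minpoly ℚ (AdjoinRoot.mk (derivative g) g), AdjoinRoot.minpoly_ne_zero hg' _, ?_,
    fun c hc => AdjoinRoot.aeval_aeval_minpoly_mk_eq_zero g hc⟩
  exact (AdjoinRoot.natDegree_minpoly_le hg' _).trans_lt (natDegree_derivative_lt (by omega))

/-- **Degree-decreasing lemma in Belyi's algorithm.** If `g ∈ ℚ[X]` is squarefree of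
degree at least 1, then there is a nonzero polynomial `g₂ ∈ ℚ[X]` of strictly smaller
degree vanishing at all finite critical values of `g`, i.e. `g₂(g(c)) = 0` for every
complex `c` with `g'(c) = 0`. -/
theorem exists_smaller_degree_poly_annihilating_critical_values
    (g : Polynomial ℚ) (hsf : Squarefree g) (hdeg : 1 ≤ g.natDegree) :
    ∃ g₂ : Polynomial ℚ, g₂ ≠ 0 ∧ g₂.natDegree < g.natDegree ∧
      ∀ c : ℂ, Polynomial.aeval c (Polynomial.derivative g) = 0 →
        Polynomial.aeval (Polynomial.aeval c g) g₂ = 0 :=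
  exists_smaller_degree_poly_annihilating_critical_values_general g hdeg
end

section
/- Let k be a field and let F, F′ ∈ k[X]. The quotient k-algebras k[X]/(F) and k[X]/(F′) are isomorphic as k-algebras if and only if there exist polynomials P₁, P₂, H₁, H₂, G₁, G₂ ∈ k[X] such that: F(P₁(X)) = H₁(X)·F′(X); F′(P₂(X)) = H₂(X)·F(X); P₁(P₂(X)) = X + G₁(X)·F(X); and P₂(P₁(X)) = X + G₂(X)·F′(X). -/
/-!
An `R`-algebra map `R[X]/(F) → R[X]/(F')` is determined by the image `P mod F'` of `X`, it acts
by `Q ↦ Q.comp P`, and such a `P` defines one exactly when `F' ∣ F.comp P`. Composing two of these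
maps composes the polynomials, so the first two identities say that `P₁` and `P₂` define maps
in both directions, and the last two that these maps are mutually inverse.
-/

open Polynomial

namespace Polynomial

variable {R : Type*} [CommRing R]

theorem aeval_mk_eq_mk_comp (I : Ideal R[X]) (P Q : R[X]) :
    aeval (Ideal.Quotient.mk I P) Q = Ideal.Quotient.mk I (Q.comp P) :=
  aeval_algHom_apply (Ideal.Quotient.mkₐ R I) P Q

theorem dvd_sub_iff_exists_eq_add_mul (A B F : R) : F ∣ A - B ↔ ∃ G, A = B + G * F := by
  simp only [dvd_iff_exists_eq_mul_left, sub_eq_iff_eq_add']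

variable {F F' P : R[X]}

noncomputable def quotientSpanCompHom (h : F' ∣ F.comp P) :
    R[X] ⧸ Ideal.span {F} →ₐ[R] R[X] ⧸ Ideal.span {F'} :=
  Ideal.Quotient.liftₐ _ (aeval (Ideal.Quotient.mk _ P)) fun a ha => by
    obtain ⟨c, rfl⟩ := Ideal.mem_span_singleton.1 ha
    rw [map_mul, aeval_mk_eq_mk_comp, (Ideal.Quotient.eq_zero_iff_dvd _ _).2 h, zero_mul]

theorem quotientSpanCompHom_mk (h : F' ∣ F.comp P) (Q : R[X]) :
    quotientSpanCompHom h (Ideal.Quotient.mk _ Q) = Ideal.Quotient.mk _ (Q.comp P) :=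
  aeval_mk_eq_mk_comp _ P Q

theorem exists_eq_quotientSpanCompHom
    (φ : R[X] ⧸ Ideal.span {F} →ₐ[R] R[X] ⧸ Ideal.span {F'}) :
    ∃ P, ∃ h : F' ∣ F.comp P, φ = quotientSpanCompHom h := by
  obtain ⟨P, hP⟩ := Ideal.Quotient.mk_surjective (φ (Ideal.Quotient.mk _ X))
  have hφ : ∀ Q, φ (Ideal.Quotient.mk _ Q) = Ideal.Quotient.mk _ (Q.comp P) := by
    intro Q
    have hX : φ.comp (Ideal.Quotient.mkₐ R _) = aeval (Ideal.Quotient.mk _ P) :=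
      algHom_ext (by simp [hP])
    rw [← aeval_mk_eq_mk_comp, ← hX]
    rfl
  have h : F' ∣ F.comp P := by
    rw [← Ideal.Quotient.eq_zero_iff_dvd, ← hφ, Ideal.Quotient.mk_singleton_self, map_zero]
  exact ⟨P, h, Ideal.Quotient.algHom_ext R (algHom_ext (by simp [hφ, quotientSpanCompHom_mk]))⟩

theorem quotientSpanCompHom_comp_eq_id_iff {P₁ P₂ : R[X]} (h₁ : F' ∣ F.comp P₁)
    (h₂ : F ∣ F'.comp P₂) :
    (quotientSpanCompHom h₂).comp (quotientSpanCompHom h₁) = AlgHom.id R _ ↔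
      F ∣ P₁.comp P₂ - X := by
  have hX : (quotientSpanCompHom h₂).comp (quotientSpanCompHom h₁) (Ideal.Quotient.mk _ X) =
      Ideal.Quotient.mk _ (P₁.comp P₂) := by
    simp [quotientSpanCompHom_mk]
  rw [← Ideal.mem_span_singleton, ← Ideal.Quotient.mk_eq_mk_iff_sub_mem, ← hX]
  constructor
  · intro h
    rw [h, AlgHom.id_apply]
  · exact fun h => Ideal.Quotient.algHom_ext R (algHom_ext h)

end Polynomial

/-- **Isomorphism of quotients of `k[X]` via polynomial identities.** For a field `k`
and `F, F' ∈ k[X]`, the `k`-algebras `k[X]/(F)` and `k[X]/(F')` are isomorphic iff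
there are `P₁, P₂, H₁, H₂, G₁, G₂ ∈ k[X]` with `F(P₁(X)) = H₁·F'`,
`F'(P₂(X)) = H₂·F`, `P₁(P₂(X)) = X + G₁·F` and `P₂(P₁(X)) = X + G₂·F'`. -/
theorem quotient_algEquiv_iff_polynomial_identities
    (k : Type*) [Field k] (F F' : Polynomial k) :
    Nonempty ((Polynomial k ⧸ Ideal.span {F}) ≃ₐ[k] (Polynomial k ⧸ Ideal.span {F'})) ↔
      ∃ P₁ P₂ H₁ H₂ G₁ G₂ : Polynomial k,
        F.comp P₁ = H₁ * F' ∧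
        F'.comp P₂ = H₂ * F ∧
        P₁.comp P₂ = X + G₁ * F ∧
        P₂.comp P₁ = X + G₂ * F' := by
  simp only [← dvd_iff_exists_eq_mul_left, ← dvd_sub_iff_exists_eq_add_mul, exists_and_left,
    exists_and_right]
  constructor
  · rintro ⟨e⟩
    obtain ⟨P₁, h₁, he⟩ := exists_eq_quotientSpanCompHom e.toAlgHom
    obtain ⟨P₂, h₂, he'⟩ := exists_eq_quotientSpanCompHom e.symm.toAlgHom
    refine ⟨P₁, h₁, P₂, h₂, (quotientSpanCompHom_comp_eq_id_iff h₁ h₂).1 ?_,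
      (quotientSpanCompHom_comp_eq_id_iff h₂ h₁).1 ?_⟩
    · rw [← he, ← he', AlgEquiv.symm_comp]
    · rw [← he, ← he', AlgEquiv.comp_symm]
  · rintro ⟨P₁, h₁, P₂, h₂, h₁₂, h₂₁⟩
    exact ⟨AlgEquiv.ofAlgHom _ _ ((quotientSpanCompHom_comp_eq_id_iff h₂ h₁).2 h₂₁)
      ((quotientSpanCompHom_comp_eq_id_iff h₁ h₂).2 h₁₂)⟩
end

section
/- In the symmetric group Sym(24) on {1,…,24}, let x = (4 1 24 3)(9 6 7 10)(16 13 12 15)(21 18 19 22) and y = (1 2 3)(4 5 6)(9 8 7)(12 11 10)(13 14 15)(16 17 18)(21 20 19)(24 23 22). Then: (a) there exists ω ∈ Sym(24) with ω⁻¹xω = x⁻¹ and ω⁻¹yω = y⁻¹ (for instance ω = (1 7 13 19)(2 8 14 20)(3 9 15 21)(4 10 16 22)(5 11 17 23)(6 12 18 24)); and (b) there is no ω ∈ Sym(24) with ω² = 1 satisfying both ω⁻¹xω = x⁻¹ and ω⁻¹yω = y⁻¹. -/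
open Equiv Function Set

/-!
If `ω⁻¹ x ω = x⁻¹` and `ω⁻¹ y ω = y⁻¹`, then `ω ∘ x⁻¹ = x ∘ ω` and `ω ∘ y⁻¹ = y ∘ ω`, so the set
of points where two such `ω` agree is closed under `x⁻¹` and `y⁻¹`. Since `⟨x, y⟩` is transitive,
such an `ω` is determined by `ω 24`. For `w a b = a b a b a⁻¹ b⁻¹`, `w x⁻¹ y⁻¹` fixes `24`, hence
`w x y` fixes `ω 24`; but the only fixed points of `w x y` are `6 = ω₀ 24` and `18 = ω₀⁻¹ 24`.
So `ω = ω₀` or `ω = ω₀⁻¹`, and both have order `4`.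
-/

section Reachability

variable {α β : Type*}

theorem Function.Semiconj.mapsTo_setOf_eq {σ τ : α → β} {f : α → α} {f' : β → β}
    (hσ : Semiconj σ f f') (hτ : Semiconj τ f f') :
    MapsTo f {z | σ z = τ z} {z | σ z = τ z} := fun z (hz : σ z = τ z) =>
  show σ (f z) = τ (f z) by rw [hσ z, hτ z, hz]

def reachStep [DecidableEq α] (f g : α → α) (S : Finset α) : Finset α :=
  S ∪ S.image f ∪ S.image g

theorem coe_iterate_reachStep_subset [DecidableEq α] {f g : α → α} {E : Set α} (hf : MapsTo f E E)
    (hg : MapsTo g E E) {S : Finset α} (hS : (S : Set α) ⊆ E) (n : ℕ) :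
    ((reachStep f g)^[n] S : Set α) ⊆ E := by
  induction n generalizing S with
  | zero => exact hS
  | succ n ih =>
    rw [iterate_succ_apply]
    refine ih ?_
    simp only [reachStep, Finset.coe_union, Finset.coe_image, union_subset_iff]
    exact ⟨⟨hS, (hf.mono_left hS).image_subset⟩, (hg.mono_left hS).image_subset⟩

theorem eq_of_semiconj_of_apply_eq [DecidableEq α] {σ τ : α → β} {f g : α → α} {f' g' : β → β}
    (hσf : Semiconj σ f f') (hτf : Semiconj τ f f') (hσg : Semiconj σ g g')
    (hτg : Semiconj τ g g') {p : α} (hp : σ p = τ p) {n : ℕ}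
    (hreach : ∀ z, z ∈ (reachStep f g)^[n] {p}) : σ = τ :=
  funext fun z => coe_iterate_reachStep_subset (hσf.mapsTo_setOf_eq hτf)
    (hσg.mapsTo_setOf_eq hτg) (by simpa using hp) n (hreach z)

end Reachability

theorem Equiv.Perm.semiconj_of_inv_mul_mul_eq {α : Type*} {ω g g' : Perm α}
    (h : ω⁻¹ * g * ω = g') : Semiconj ω g' g := fun z => by
  simp [← h]

section InvertsPair

variable {G : Type*} [Group G] {ω x y : G}

def InvertsPair (ω x y : G) : Prop :=
  ω⁻¹ * x * ω = x⁻¹ ∧ ω⁻¹ * y * ω = y⁻¹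

theorem InvertsPair.inv (h : InvertsPair ω x y) : InvertsPair ω⁻¹ x y := by
  have key : ∀ a : G, ω⁻¹ * a * ω = a⁻¹ → ω⁻¹⁻¹ * a * ω⁻¹ = a⁻¹ := fun a ha =>
    calc ω⁻¹⁻¹ * a * ω⁻¹ = (ω * (ω⁻¹ * a * ω) * ω⁻¹)⁻¹ := by rw [ha]; group
      _ = a⁻¹ := by group
  exact ⟨key x h.1, key y h.2⟩

-- Among the words `w` with `w x⁻¹ y⁻¹` fixing `24`, this short one already has `w x y` fixing
-- only `6` and `18`.
def probeWord (a b : G) : G :=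
  a * b * a * b * a⁻¹ * b⁻¹

theorem InvertsPair.inv_mul_probeWord_mul (h : InvertsPair ω x y) :
    ω⁻¹ * probeWord x y * ω = probeWord x⁻¹ y⁻¹ := by
  unfold probeWord
  conv_rhs => rw [← h.1, ← h.2]
  group

theorem InvertsPair.eq_of_apply_eq {α : Type*} [DecidableEq α] {ω ω' x y : Perm α}
    (h : InvertsPair ω x y) (h' : InvertsPair ω' x y) {p : α} (hp : ω p = ω' p) {n : ℕ}
    (hreach : ∀ z, z ∈ (reachStep ⇑x⁻¹ ⇑y⁻¹)^[n] {p}) : ω = ω' :=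
  DFunLike.coe_injective <| eq_of_semiconj_of_apply_eq
    (Perm.semiconj_of_inv_mul_mul_eq h.1) (Perm.semiconj_of_inv_mul_mul_eq h'.1)
    (Perm.semiconj_of_inv_mul_mul_eq h.2) (Perm.semiconj_of_inv_mul_mul_eq h'.2) hp hreach

end InvertsPair

namespace Dessin24

def x : Perm (Fin 24) :=
  c[4, 1, 24, 3] * c[9, 6, 7, 10] * c[16, 13, 12, 15] * c[21, 18, 19, 22]

def y : Perm (Fin 24) :=
  c[1, 2, 3] * c[4, 5, 6] * c[9, 8, 7] * c[12, 11, 10] * c[13, 14, 15] *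
    c[16, 17, 18] * c[21, 20, 19] * c[24, 23, 22]

def ω₀ : Perm (Fin 24) :=
  c[1, 7, 13, 19] * c[2, 8, 14, 20] * c[3, 9, 15, 21] * c[4, 10, 16, 22] *
    c[5, 11, 17, 23] * c[6, 12, 18, 24]

theorem invertsPair_ω₀ : InvertsPair ω₀ x y :=
  ⟨Equiv.ext (by decide +kernel), Equiv.ext (by decide +kernel)⟩

theorem mem_iterate_reachStep_inv : ∀ z, z ∈ (reachStep ⇑x⁻¹ ⇑y⁻¹)^[8] {24} := by
  decide +kernel

theorem probeWord_inv_apply : probeWord x⁻¹ y⁻¹ 24 = 24 := by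
  decide +kernel

theorem eq_of_probeWord_apply_eq_self : ∀ q, probeWord x y q = q → q = 6 ∨ q = 18 := by
  decide +kernel

theorem apply_eq_of_invertsPair {ω : Perm (Fin 24)} (h : InvertsPair ω x y) :
    ω 24 = ω₀ 24 ∨ ω 24 = ω₀⁻¹ 24 := by
  have hfix : probeWord x y (ω 24) = ω 24 := by
    rw [← Perm.semiconj_of_inv_mul_mul_eq h.inv_mul_probeWord_mul 24, probeWord_inv_apply]
  exact eq_of_probeWord_apply_eq_self _ hfix

theorem eq_of_invertsPair {ω : Perm (Fin 24)} (h : InvertsPair ω x y) :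
    ω = ω₀ ∨ ω = ω₀⁻¹ :=
  (apply_eq_of_invertsPair h).imp
    (fun hp => h.eq_of_apply_eq invertsPair_ω₀ hp mem_iterate_reachStep_inv)
    (fun hp => h.eq_of_apply_eq invertsPair_ω₀.inv hp mem_iterate_reachStep_inv)

theorem sq_ne_one_of_invertsPair {ω : Perm (Fin 24)} (h : InvertsPair ω x y) : ω ^ 2 ≠ 1 := by
  rcases eq_of_invertsPair h with rfl | rfl <;> decide +kernel

end Dessin24

/-- **A dessin with real field of moduli not definable over ℝ.** In `Sym(24)`
(with points labelled by `Fin 24`, where the label `24` is `0`), for the monodromy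
permutations `x`, `y` below there exists `ω` with `ω⁻¹xω = x⁻¹` and `ω⁻¹yω = y⁻¹`
(for instance the given `ω₀`), but no such `ω` of order dividing 2 exists. -/
theorem dessin_real_moduli_not_definable_over_R :
    let x : Equiv.Perm (Fin 24) :=
      c[4, 1, 24, 3] * c[9, 6, 7, 10] * c[16, 13, 12, 15] * c[21, 18, 19, 22]
    let y : Equiv.Perm (Fin 24) :=
      c[1, 2, 3] * c[4, 5, 6] * c[9, 8, 7] * c[12, 11, 10] * c[13, 14, 15] *
        c[16, 17, 18] * c[21, 20, 19] * c[24, 23, 22]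
    let ω₀ : Equiv.Perm (Fin 24) :=
      c[1, 7, 13, 19] * c[2, 8, 14, 20] * c[3, 9, 15, 21] * c[4, 10, 16, 22] *
        c[5, 11, 17, 23] * c[6, 12, 18, 24]
    (ω₀⁻¹ * x * ω₀ = x⁻¹ ∧ ω₀⁻¹ * y * ω₀ = y⁻¹) ∧
      (∃ ω : Equiv.Perm (Fin 24), ω⁻¹ * x * ω = x⁻¹ ∧ ω⁻¹ * y * ω = y⁻¹) ∧
      ¬ ∃ ω : Equiv.Perm (Fin 24), ω ^ 2 = 1 ∧ ω⁻¹ * x * ω = x⁻¹ ∧ ω⁻¹ * y * ω = y⁻¹ := by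
  intro x y ω₀
  refine ⟨Dessin24.invertsPair_ω₀, ⟨ω₀, Dessin24.invertsPair_ω₀⟩, ?_⟩
  rintro ⟨ω, hsq, hω⟩
  exact Dessin24.sq_ne_one_of_invertsPair hω hsq
end

section
/- In Sym(12), let y = (1 4)(2 5)(7 10)(8 11)(3 6 9 12), x = (1 2 3 7 8 9)(6 12), x₁ = (1 2 3 7 8 9)(4 10), and x₂ = (1 2 3 7 8 9)(5 11). For elements a, b of a group, write u^v = v⁻¹uv and define the word w(a,b) = (a³b²)·(a³b²)^a·(a³b²)^{a²}. Then w(x,y) = 1, while w(x₁,y) ≠ 1 and w(x₂,y) ≠ 1. Consequently there is no group homomorphism φ : ⟨x,y⟩ → Sym(12) with φ(x) = x₁ and φ(y) = y, and none with φ(x) = x₂ and φ(y) = y. -/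
/-- The word `w(a,b) = (a³b²)·(a³b²)^a·(a³b²)^{a²}`, where `u^v = v⁻¹uv`. -/
def conjWord {G : Type*} [Group G] (a b : G) : G :=
  (a ^ 3 * b ^ 2) * (a⁻¹ * (a ^ 3 * b ^ 2) * a) * ((a ^ 2)⁻¹ * (a ^ 3 * b ^ 2) * a ^ 2)

lemma map_conjWord {G H : Type*} [Group G] [Group H] (φ : G →* H) (a b : G) :
    φ (conjWord a b) = conjWord (φ a) (φ b) := by
  simp only [conjWord, map_mul, map_inv, map_pow]

lemma not_exists_hom_of_conjWord {G H : Type*} [Group G] [Group H] {x y : G} {x' y' : H}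
    (hxy : conjWord x y = 1) (hxy' : conjWord x' y' ≠ 1) :
    ¬ ∃ φ : ↥(Subgroup.closure ({x, y} : Set G)) →* H,
      φ ⟨x, Subgroup.subset_closure (Set.mem_insert x {y})⟩ = x' ∧
      φ ⟨y, Subgroup.subset_closure (Set.mem_insert_of_mem x rfl)⟩ = y' := by
  rintro ⟨φ, hφx, hφy⟩
  set S := Subgroup.closure ({x, y} : Set G)
  set gx : S := ⟨x, Subgroup.subset_closure (Set.mem_insert x {y})⟩
  set gy : S := ⟨y, Subgroup.subset_closure (Set.mem_insert_of_mem x rfl)⟩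
  have hS : conjWord gx gy = 1 := Subtype.ext ((map_conjWord S.subtype gx gy).trans hxy)
  apply hxy'
  rw [← hφx, ← hφy, ← map_conjWord, hS, map_one]

set_option maxRecDepth 20000 in
/-- **The relation distinguishing `D₀` from its Galois conjugates.** In `Sym(12)`
(labels in `Fin 12`, `12` being `0`), the word `w(x,y)` is trivial for the
cartographic generators of `D₀` but not for those of its two conjugates; hence no
group homomorphism `⟨x,y⟩ → Sym(12)` sends `x ↦ x₁, y ↦ y` or `x ↦ x₂, y ↦ y`. -/
theorem relation_distinguishes_conjugate_dessins :
    let y : Equiv.Perm (Fin 12) := c[1, 4] * c[2, 5] * c[7, 10] * c[8, 11] * c[3, 6, 9, 12]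
    let x : Equiv.Perm (Fin 12) := c[1, 2, 3, 7, 8, 9] * c[6, 12]
    let x₁ : Equiv.Perm (Fin 12) := c[1, 2, 3, 7, 8, 9] * c[4, 10]
    let x₂ : Equiv.Perm (Fin 12) := c[1, 2, 3, 7, 8, 9] * c[5, 11]
    conjWord x y = 1 ∧ conjWord x₁ y ≠ 1 ∧ conjWord x₂ y ≠ 1 ∧
      (¬ ∃ φ : ↥(Subgroup.closure ({x, y} : Set (Equiv.Perm (Fin 12)))) →*
          Equiv.Perm (Fin 12),
        φ ⟨x, Subgroup.subset_closure (Set.mem_insert x {y})⟩ = x₁ ∧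
        φ ⟨y, Subgroup.subset_closure (Set.mem_insert_of_mem x rfl)⟩ = y) ∧
      (¬ ∃ φ : ↥(Subgroup.closure ({x, y} : Set (Equiv.Perm (Fin 12)))) →*
          Equiv.Perm (Fin 12),
        φ ⟨x, Subgroup.subset_closure (Set.mem_insert x {y})⟩ = x₂ ∧
        φ ⟨y, Subgroup.subset_closure (Set.mem_insert_of_mem x rfl)⟩ = y) := by
  intro y x x₁ x₂
  have h₀ : conjWord x y = 1 := by decide
  have h₁ : conjWord x₁ y ≠ 1 := by decide
  have h₂ : conjWord x₂ y ≠ 1 := by decide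
  exact ⟨h₀, h₁, h₂, not_exists_hom_of_conjWord h₀ h₁, not_exists_hom_of_conjWord h₀ h₂⟩
end

section
/- In the symmetric group Sym(6) on {1,…,6}, let y = (1 2 3)(4 5). Then for each x ∈ {(1 4)(5 6), (1 4)(2 6), (1 4)(3 6)}, the subgroup generated by x and y is all of Sym(6), and in each case (x·y)⁻¹ is a 6-cycle. -/
/-!
Each product `x * y` is a cycle through all six points, and `Sym(n)` is generated by an
`n`-cycle together with a transposition of two points adjacent on it. For
`x = (1 4)(2 6)` and `x = (1 4)(3 6)` the transposition `y ^ 3 = (4 5)` is adjacent on `x * y`;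
for `x = (1 4)(5 6)` it is not, but its conjugate `(3 4)` by `y x y x` is. The label 6 is `0 : Fin 6`.
-/

open Equiv

namespace Equiv.Perm

variable {α : Type*} [Fintype α] [DecidableEq α]

def IsFullCycle (σ : Perm α) : Prop :=
  σ.IsCycle ∧ σ.support = Finset.univ

theorem IsFullCycle.inv {σ : Perm α} (hσ : IsFullCycle σ) : IsFullCycle σ⁻¹ :=
  ⟨hσ.1.inv, (support_inv σ).trans hσ.2⟩

theorem IsFullCycle.card_support {σ : Perm α} (hσ : IsFullCycle σ) :
    σ.support.card = Fintype.card α := by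
  rw [hσ.2, Finset.card_univ]

theorem isFullCycle_formPerm [Nontrivial α] {l : List α} (hl : l.Nodup) (hmem : ∀ a, a ∈ l) :
    IsFullCycle l.formPerm := by
  have htoFinset : l.toFinset = Finset.univ := Finset.eq_univ_of_forall (by simpa using hmem)
  have hlen : 2 ≤ l.length := by
    rw [← List.toFinset_card_of_nodup hl, htoFinset, Finset.card_univ]
    exact Fintype.one_lt_card
  refine ⟨List.isCycle_formPerm hl hlen, ?_⟩
  rw [List.support_formPerm_of_nodup l hl fun a h => by simp [h] at hlen, htoFinset]

theorem IsFullCycle.subgroup_eq_top_of_mem_of_swap_mem {H : Subgroup (Perm α)} {σ : Perm α}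
    (hσ : IsFullCycle σ) (hσH : σ ∈ H) {a b : α} (hab : σ a = b) (hswap : swap a b ∈ H) :
    H = ⊤ := by
  rw [eq_top_iff, ← closure_cycle_adjacent_swap hσ.1 hσ.2 a, Subgroup.closure_le,
    Set.insert_subset_iff, Set.singleton_subset_iff, hab]
  exact ⟨hσH, hswap⟩

end Equiv.Perm

/-- **Monodromy of the three degree-6 trees.** In `Sym(6)` (labels in `Fin 6`, `6`
being `0`), with `y = (1 2 3)(4 5)`, each of the three permutations
`x ∈ {(1 4)(5 6), (1 4)(2 6), (1 4)(3 6)}` generates, together with `y`, all of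
`Sym(6)`, and in each case `(x·y)⁻¹` is a 6-cycle. -/
theorem trees_generate_sym6 :
    let y : Equiv.Perm (Fin 6) := c[1, 2, 3] * c[4, 5]
    ∀ x ∈ ({c[1, 4] * c[5, 6], c[1, 4] * c[2, 6], c[1, 4] * c[3, 6]} :
        Set (Equiv.Perm (Fin 6))),
      Subgroup.closure ({x, y} : Set (Equiv.Perm (Fin 6))) = ⊤ ∧
        ((x * y)⁻¹).IsCycle ∧ ((x * y)⁻¹).support.card = 6 := by
  intro y x hx
  set H := Subgroup.closure ({x, y} : Set (Perm (Fin 6)))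
  have hxH : x ∈ H := Subgroup.subset_closure (Set.mem_insert _ _)
  have hyH : y ∈ H := Subgroup.subset_closure (Set.mem_insert_of_mem _ rfl)
  have hswap : swap 4 5 ∈ H := (show y ^ 3 = swap 4 5 by decide) ▸ pow_mem hyH 3
  suffices Perm.IsFullCycle (x * y) ∧ ∃ a b, (x * y) a = b ∧ swap a b ∈ H by
    obtain ⟨hσ, a, b, hab, hab_mem⟩ := this
    exact ⟨hσ.subgroup_eq_top_of_mem_of_swap_mem (mul_mem hxH hyH) hab hab_mem, hσ.inv.1,
      hσ.inv.card_support⟩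
  rcases hx with hx | hx | hx
  · have hσ : x * y = [0, 5, 1, 2, 3, 4].formPerm := by rw [hx]; decide
    obtain ⟨h4, h5⟩ : (y * x * y * x) 4 = 3 ∧ (y * x * y * x) 5 = 4 := by
      rw [hx]; decide
    have hgH : y * x * y * x ∈ H := mul_mem (mul_mem (mul_mem hyH hxH) hyH) hxH
    have hconj := mul_mem (mul_mem hgH hswap) (inv_mem hgH)
    rw [← swap_apply_apply, h4, h5] at hconj
    exact ⟨hσ ▸ Perm.isFullCycle_formPerm (by decide) (by decide), 3, 4, by rw [hσ]; decide,
      hconj⟩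
  · have hσ : x * y = [0, 2, 3, 4, 5, 1].formPerm := by rw [hx]; decide
    exact ⟨hσ ▸ Perm.isFullCycle_formPerm (by decide) (by decide), 4, 5, by rw [hσ]; decide,
      hswap⟩
  · have hσ : x * y = [0, 3, 4, 5, 1, 2].formPerm := by rw [hx]; decide
    exact ⟨hσ ▸ Perm.isFullCycle_formPerm (by decide) (by decide), 4, 5, by rw [hσ]; decide,
      hswap⟩
end

section
/- In the symmetric group Sym(6) on {1,…,6}, let x̄ = (1 2 3) and ȳ = (1 4)(2 5)(3 6). Then the subgroup F = ⟨x̄, ȳ⟩ has order 18, x̄³ = 1, ȳ² = 1, and x̄ commutes with ȳ·x̄·ȳ. -/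
/-!
Since `y` is an involution and `x` commutes with `z = y x y`, moving every `y` of a word in
`x, y` to the right (`y x = z y`, `y z = x y`) turns it into `x ^ a * z ^ b * y ^ c`. As
`x ^ 3 = z ^ 3 = 1`, this leaves at most `3 * 3 * 2 = 18` elements, and the 18 words are distinct
permutations.
-/

section
variable {G : Type*} [Group G] {x y : G}

def pairNormalForm (x y : G) {n : ℕ} (p : Fin n × Fin n × Fin 2) : G :=
  x ^ (p.1 : ℕ) * (y * x * y) ^ (p.2.1 : ℕ) * y ^ (p.2.2 : ℕ)

theorem exists_zpow_mul_zpow_mul_pow_of_mem_closure_pair (hy : y ^ 2 = 1)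
    (hxz : Commute x (y * x * y)) {g : G} (hg : g ∈ Subgroup.closure {x, y}) :
    ∃ (a b : ℤ) (c : Fin 2), g = x ^ a * (y * x * y) ^ b * y ^ (c : ℕ) := by
  have hyy : y * y = 1 := by rw [← sq, hy]
  have hyinv : y⁻¹ = y := inv_eq_of_mul_eq_one_right hyy
  have hyx : y * x = (y * x * y) * y := by rw [mul_assoc _ y, hyy, mul_one]
  generalize y * x * y = z at hxz hyx ⊢
  have hyxinv : y * x⁻¹ = z⁻¹ * y := by
    rw [eq_inv_mul_iff_mul_eq, ← mul_assoc, ← hyx, mul_inv_cancel_right]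
  induction hg using Subgroup.closure_induction_right with
  | one => exact ⟨0, 0, 0, by simp⟩
  | mul_right g _ s hs ih =>
    obtain ⟨a, b, c, rfl⟩ := ih
    rcases hs with rfl | rfl <;> fin_cases c
    · exact ⟨a + 1, b, 0, by simp [zpow_add_one, mul_assoc, (hxz.zpow_right b).eq]⟩
    · exact ⟨a, b + 1, 1, by simp [zpow_add_one, mul_assoc, hyx]⟩
    · exact ⟨a, b, 1, by simp⟩
    · exact ⟨a, b, 0, by simp [mul_assoc, hyy]⟩
  | mul_inv_cancel g _ s hs ih =>
    obtain ⟨a, b, c, rfl⟩ := ih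
    rcases hs with rfl | rfl <;> fin_cases c
    · exact ⟨a - 1, b, 0, by simp [zpow_sub_one, mul_assoc, (hxz.zpow_right b).inv_left.eq]⟩
    · exact ⟨a, b - 1, 1, by simp [zpow_sub_one, mul_assoc, hyxinv]⟩
    · exact ⟨a, b, 1, by simp [hyinv]⟩
    · exact ⟨a, b, 0, by simp [mul_assoc, hyinv, hyy]⟩

theorem exists_fin_zpow_eq_pow {n : ℕ} [NeZero n] (hn : x ^ n = 1) (a : ℤ) :
    ∃ i : Fin n, x ^ a = x ^ (i : ℕ) := by
  have hpos : (0 : ℤ) < n := by exact_mod_cast Nat.pos_of_neZero n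
  have hr0 := Int.emod_nonneg a hpos.ne'
  have hrn := Int.emod_lt_of_pos a hpos
  refine ⟨⟨(a % n).toNat, by omega⟩, ?_⟩
  rw [zpow_eq_zpow_emod' a hn, ← zpow_natCast, Int.toNat_of_nonneg hr0]

theorem exists_pairNormalForm_eq_of_mem_closure_pair {n : ℕ} [NeZero n] (hy : y ^ 2 = 1)
    (hxz : Commute x (y * x * y)) (hn : x ^ n = 1) {g : G} (hg : g ∈ Subgroup.closure {x, y}) :
    ∃ p : Fin n × Fin n × Fin 2, pairNormalForm x y p = g := by
  have hyinv : y⁻¹ = y := inv_eq_of_mul_eq_one_right (by rw [← sq, hy])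
  have hzn : (y * x * y) ^ n = 1 := by
    nth_rewrite 2 [← hyinv]
    rw [conj_pow, hn, mul_one, mul_inv_cancel]
  obtain ⟨a, b, c, rfl⟩ := exists_zpow_mul_zpow_mul_pow_of_mem_closure_pair hy hxz hg
  obtain ⟨i, hi⟩ := exists_fin_zpow_eq_pow hn a
  obtain ⟨j, hj⟩ := exists_fin_zpow_eq_pow hzn b
  exact ⟨(i, j, c), by rw [pairNormalForm, hi, hj]⟩

theorem pairNormalForm_mem_closure_pair {n : ℕ} (p : Fin n × Fin n × Fin 2) :
    pairNormalForm x y p ∈ Subgroup.closure {x, y} := by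
  have hxc : x ∈ Subgroup.closure {x, y} := Subgroup.subset_closure (by simp)
  have hyc : y ∈ Subgroup.closure {x, y} := Subgroup.subset_closure (by simp)
  exact mul_mem (mul_mem (pow_mem hxc _) (pow_mem (mul_mem (mul_mem hyc hxc) hyc) _))
    (pow_mem hyc _)

theorem coe_closure_pair_eq_range_pairNormalForm {n : ℕ} [NeZero n] (hy : y ^ 2 = 1)
    (hxz : Commute x (y * x * y)) (hn : x ^ n = 1) :
    (Subgroup.closure {x, y} : Set G) = Set.range (pairNormalForm x y (n := n)) :=
  Set.Subset.antisymm (fun _ hg => exists_pairNormalForm_eq_of_mem_closure_pair hy hxz hn hg)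
    (Set.range_subset_iff.mpr pairNormalForm_mem_closure_pair)

end

/-- **The group `F ≅ (ℤ/3 × ℤ/3) ⋊ ℤ/2`.** In `Sym(6)` (labels in `Fin 6`, `6`
being `0`), with `x̄ = (1 2 3)` and `ȳ = (1 4)(2 5)(3 6)`, the subgroup `⟨x̄, ȳ⟩`
has order 18, `x̄³ = 1`, `ȳ² = 1`, and `x̄` commutes with `ȳ·x̄·ȳ`. -/
theorem cartographic_group_of_fermat_dessin :
    let x : Equiv.Perm (Fin 6) := c[1, 2, 3]
    let y : Equiv.Perm (Fin 6) := c[1, 4] * c[2, 5] * c[3, 6]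
    Nat.card (Subgroup.closure ({x, y} : Set (Equiv.Perm (Fin 6)))) = 18 ∧
      x ^ 3 = 1 ∧ y ^ 2 = 1 ∧ Commute x (y * x * y) := by
  intro x y
  have hx : x ^ 3 = 1 := by decide
  have hy : y ^ 2 = 1 := by decide
  have hxz : Commute x (y * x * y) := by unfold Commute SemiconjBy; decide
  have hinj : Function.Injective (pairNormalForm x y (n := 3)) := by
    set_option maxRecDepth 2000 in decide
  refine ⟨?_, hx, hy, hxz⟩
  rw [← SetLike.coe_sort_coe, coe_closure_pair_eq_range_pairNormalForm hy hxz hx,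
    Nat.card_range_of_injective hinj]
  simp
end
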